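/- Let q = 2p be even with p ≥ 3, λ = 2·cos(π/q), and α ∈ (1/2, 1/λ). For every (t,v) ∈ A ∪ D_3 one has 𝒯_α^{p−1}(t,v) = ( ((−λ²−2)t − λ)/((λ³−λ)t + λ²−2), ((−λ²+2)v + λ³−λ)/(−λv + λ²+2) ). -/

import Mathlib

/-- The digit `d(x) = ⌊|1/(λx)| + 1 - α⌋` of the α-Rosen continued fraction. -/
noncomputable def rosenD (lam α x : ℝ) : ℤ := ⌊|1 / (lam * x)| + 1 - α⌋

/-- The α-Rosen continued fraction map `T_α` on `[(α-1)λ, αλ)`. -/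
noncomputable def rosenT (lam α x : ℝ) : ℝ :=
  if x = 0 then 0 else Real.sign x / x - lam * (rosenD lam α x : ℝ)

/-- `x` is `G_q`-irrational: the orbit of `x` under `T_α` never hits `0`. -/
def GIrrational (lam α x : ℝ) : Prop := ∀ n : ℕ, (rosenT lam α)^[n] x ≠ 0

/-- The recursion `u_n = d_n(x)·λ·u_{n-1} + ε_n(x)·u_{n-2}` for the numerators and
denominators of the α-Rosen convergents, with the index shifted by one:
`rosenPQ lam α x a b n = u_{n-1}` where `u_{-1} = a`, `u_0 = b`. -/
noncomputable def rosenPQ (lam α x a b : ℝ) : ℕ → ℝ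
  | 0 => a
  | 1 => b
  | n + 2 =>
      (rosenD lam α ((rosenT lam α)^[n] x) : ℝ) * lam * rosenPQ lam α x a b (n + 1)
        + Real.sign ((rosenT lam α)^[n] x) * rosenPQ lam α x a b n

/-- The approximation coefficient `Θ_n(x) = q_n² · |x - p_n/q_n|` of the α-Rosen
expansion of `x` (with `p_{-1}=1, q_{-1}=0, p_0=0, q_0=1`). -/
noncomputable def rosenTheta (lam α x : ℝ) (n : ℕ) : ℝ :=
  (rosenPQ lam α x 0 1 (n + 1)) ^ 2 *
    |x - rosenPQ lam α x 1 0 (n + 1) / rosenPQ lam α x 0 1 (n + 1)|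

/-- The natural extension map `𝒯_α(t,v) = (T_α(t), 1/(d(t)λ + ε(t)v))`. -/
noncomputable def rosenNE (lam α : ℝ) (tv : ℝ × ℝ) : ℝ × ℝ :=
  (rosenT lam α tv.1, 1 / ((rosenD lam α tv.1 : ℝ) * lam + Real.sign tv.1 * tv.2))

/-- The region `A`: `-δ₁ ≤ t ≤ -1/(λ+1)` and `g(t) ≤ v ≤ λ-1`, where
`g(x) = (|x| - 1/2)/((1/2)x)` and `δ₁ = 1/((α+1)λ)`. -/
noncomputable def regA (lam α : ℝ) : Set (ℝ × ℝ) :=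
  {tv | -(1 / ((α + 1) * lam)) ≤ tv.1 ∧ tv.1 ≤ -(1 / (lam + 1)) ∧
    (|tv.1| - 1 / 2) / ((1 / 2) * tv.1) ≤ tv.2 ∧ tv.2 ≤ lam - 1}

/-- The region `D₃`: `r_{p-1} ≤ t ≤ -2/(λ+4)` and `g(t) ≤ v ≤ λ/2`, where
`r_{p-1} = -(2α-1)λ/(2-(1-α)λ²)`. -/
noncomputable def regD3 (lam α : ℝ) : Set (ℝ × ℝ) :=
  {tv | -((2 * α - 1) * lam / (2 - (1 - α) * lam ^ 2)) ≤ tv.1 ∧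
    tv.1 ≤ -(2 / (lam + 4)) ∧
    (|tv.1| - 1 / 2) / ((1 / 2) * tv.1) ≤ tv.2 ∧ tv.2 ≤ lam / 2}

noncomputable def auxNT (θ t x : ℝ) : ℝ :=
  -(2 * Real.sin ((x+1)*θ) + Real.sin ((x-1)*θ)) * t - Real.sin (x*θ)

noncomputable def auxDT (θ t x : ℝ) : ℝ :=
  (2 * Real.sin (x*θ) + Real.sin ((x-2)*θ)) * t + Real.sin ((x-1)*θ)

noncomputable def auxNV (θ v x : ℝ) : ℝ :=
  -Real.sin ((x-1)*θ) * v + 2 * Real.sin (x*θ) + Real.sin ((x-2)*θ)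

noncomputable def auxDV (θ v x : ℝ) : ℝ :=
  -Real.sin (x*θ) * v + 2 * Real.sin ((x+1)*θ) + Real.sin ((x-1)*θ)

def rosenInv (lam α t v θ : ℝ) (j : ℕ) : Prop :=
  (rosenNE lam α)^[j] (t, v) =
      (auxNT θ t j / auxDT θ t j, auxNV θ v j / auxDV θ v j) ∧
  auxDT θ t j ≠ 0 ∧
  0 < auxDV θ v j ∧
  -(1/(α*lam)) ≤ auxNT θ t j / auxDT θ t j ∧
  auxNT θ t j / auxDT θ t j ≤ -Real.cos (((j:ℝ)+1)*θ) / Real.cos ((j:ℝ)*θ) ∧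
  0 < auxNV θ v j / auxDV θ v j ∧
  auxNV θ v j / auxDV θ v j ≤ Real.sin ((j:ℝ)*θ) / Real.sin (((j:ℝ)+1)*θ)

lemma rosenD_eq {lam α : ℝ} (x : ℝ) (n : ℤ) (hlam : 0 < lam) (hx : x < 0)
    (h1 : (n:ℝ) - 1 + α ≤ -1/(lam*x)) (h2 : -1/(lam*x) < (n:ℝ) + α) :
    rosenD lam α x = n := by
  have hxl : lam * x < 0 := mul_neg_of_pos_of_neg hlam hx
  have habs : |1/(lam*x)| = -1/(lam*x) := by
    rw [abs_of_neg (div_neg_of_pos_of_neg one_pos hxl)]; ring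
  unfold rosenD
  rw [habs, Int.floor_eq_iff]
  constructor
  · linarith
  · push_cast; linarith

lemma rosenNE_step {lam α : ℝ} (x w : ℝ) (hx : x < 0) :
    rosenNE lam α (x, w)
      = (-1/x - lam * (rosenD lam α x : ℝ), 1/((rosenD lam α x : ℝ)*lam - w)) := by
  unfold rosenNE rosenT
  simp only [if_neg hx.ne, Real.sign_of_neg hx]
  rw [Prod.mk.injEq]
  constructor <;> ring_nf

set_option maxHeartbeats 4000000 in
lemma rosen_key (p : ℕ) (hp : 3 ≤ p) (lam α t v : ℝ)
    (hlam : lam = 2 * Real.cos (Real.pi / (2 * (p:ℝ))))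
    (hα1 : 1/2 < α) (hα2 : α * lam < 1)
    (ht1 : -(1/((1+α)*lam)) ≤ t) (ht2 : t < -(1/((2+α)*lam)))
    (ht3 : -1/t - 2*lam ≤
      -Real.cos (2*(Real.pi/(2*(p:ℝ)))) / Real.cos (Real.pi/(2*(p:ℝ))))
    (hv : v ≤ lam) :
    (rosenNE lam α)^[p-1] (t, v) =
      (((-lam^2-2)*t - lam)/((lam^3-lam)*t + lam^2-2),
       ((-lam^2+2)*v + lam^3-lam)/(-lam*v + lam^2+2)) := by
  -- basic facts
  have hp' : (3:ℝ) ≤ (p:ℝ) := by exact_mod_cast hp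
  have hppos : (0:ℝ) < (p:ℝ) := by linarith
  obtain ⟨θ, hθdef⟩ : ∃ x:ℝ, x = Real.pi / (2*(p:ℝ)) := ⟨_, rfl⟩
  rw [← hθdef] at hlam ht3
  have pipos := Real.pi_pos
  have hθpos : 0 < θ := by rw [hθdef]; positivity
  have hpθ : (p:ℝ) * θ = Real.pi / 2 := by
    rw [hθdef]; field_simp
  have hθ6 : θ ≤ Real.pi / 6 := by
    rw [hθdef, div_le_div_iff₀ (by linarith) (by norm_num)]
    nlinarith
  have hcosθ : Real.cos θ = lam / 2 := by rw [hlam]; ring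
  have hαpos : (0:ℝ) < α := by linarith
  have hlam2 : lam ≤ 2 := by
    have := Real.cos_le_one θ; rw [hlam]; linarith
  have hlam1 : 1 < lam := by
    have h13 : Real.cos (Real.pi/3) < Real.cos θ := by
      apply Real.cos_lt_cos_of_nonneg_of_le_pi hθpos.le (by linarith)
      linarith
    rw [Real.cos_pi_div_three] at h13
    rw [hlam]; linarith
  have hlampos : (0:ℝ) < lam := by linarith
  -- positivity of sin / cos in the range
  have hsinpos : ∀ x:ℝ, 0 < x → x ≤ (p:ℝ) → 0 < Real.sin (x*θ) := by
    intro x hx hxp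
    apply Real.sin_pos_of_pos_of_lt_pi (by positivity)
    have : x*θ ≤ (p:ℝ)*θ := by nlinarith
    rw [hpθ] at this; linarith
  have hcospos : ∀ x:ℝ, 0 ≤ x → x ≤ (p:ℝ)-1 → 0 < Real.cos (x*θ) := by
    intro x hx hxp
    apply Real.cos_pos_of_mem_Ioo
    constructor
    · have : (0:ℝ) ≤ x*θ := by positivity
      linarith
    · have : x*θ ≤ ((p:ℝ)-1)*θ := by nlinarith
      have h2 : ((p:ℝ)-1)*θ = Real.pi/2 - θ := by rw [← hpθ]; ring
      rw [h2] at this; linarith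
  have hcosnn : ∀ x:ℝ, 0 ≤ x → x ≤ (p:ℝ) → 0 ≤ Real.cos (x*θ) := by
    intro x hx hxp
    apply Real.cos_nonneg_of_mem_Icc
    constructor
    · have : (0:ℝ) ≤ x*θ := by positivity
      linarith
    · have : x*θ ≤ (p:ℝ)*θ := by nlinarith
      rw [hpθ] at this; linarith
  -- Chebyshev recurrences
  have hrecs : ∀ x:ℝ, Real.sin ((x+1)*θ) = lam * Real.sin (x*θ) - Real.sin ((x-1)*θ) := by
    intro x
    have h1 : (x+1)*θ = x*θ + θ := by ring
    have h2 : (x-1)*θ = x*θ - θ := by ring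
    rw [h1, h2, Real.sin_add, Real.sin_sub, hlam, hθdef]
    ring
  have hrecc : ∀ x:ℝ, Real.cos ((x+1)*θ) = lam * Real.cos (x*θ) - Real.cos ((x-1)*θ) := by
    intro x
    have h1 : (x+1)*θ = x*θ + θ := by ring
    have h2 : (x-1)*θ = x*θ - θ := by ring
    rw [h1, h2, Real.cos_add, Real.cos_sub, hlam, hθdef]
    ring
  -- start of main work
  have ht0 : t < 0 := by
    have h1 : (0:ℝ) < 1/((2+α)*lam) := by positivity
    linarith
  have key : ∀ j:ℕ, 1 ≤ j → j ≤ p-1 → rosenInv lam α t v θ j := by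
    intro j hj
    induction j, hj using Nat.le_induction with
    | base =>
      intro _
      have hlt : lam * t < 0 := mul_neg_of_pos_of_neg hlampos ht0
      have hne1 : (1+α)*lam ≠ 0 := by positivity
      have hne2 : (2+α)*lam ≠ 0 := by positivity
      have e1 : ((1+α)*lam)*(-(1/((1+α)*lam))) = -1 := by field_simp
      have e2 : ((2+α)*lam)*(-(1/((2+α)*lam))) = -1 := by field_simp
      have h1a : -1 ≤ ((1+α)*lam)*t := by
        nlinarith [mul_le_mul_of_nonneg_left ht1 (by positivity : (0:ℝ) ≤ (1+α)*lam), e1]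
      have h1b : ((2+α)*lam)*t < -1 := by
        nlinarith [mul_lt_mul_of_pos_left ht2 (by positivity : (0:ℝ) < (2+α)*lam), e2]
      have hinv : (1/(lam*t))*(lam*t) = 1 := one_div_mul_cancel hlt.ne
      have hd2 : rosenD lam α t = 2 := by
        apply rosenD_eq t 2 hlampos ht0
        · push_cast
          rw [le_div_iff_of_neg hlt]
          nlinarith [h1a]
        · push_cast
          rw [div_lt_iff_of_neg hlt]
          nlinarith [h1b]
      have hstep1 := rosenNE_step (lam:=lam) (α:=α) t v ht0
      rw [hd2] at hstep1
      push_cast at hstep1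
      have hsθ : 0 < Real.sin θ := by
        have := hsinpos 1 one_pos (by linarith)
        simpa using this
      have h2v : 0 < 2*lam - v := by linarith
      have a1 : ((1:ℝ)+1)*θ = 2*θ := by ring
      have a2 : ((1:ℝ)-1)*θ = 0 := by ring
      have a3 : ((1:ℝ)-2)*θ = -θ := by ring
      have a4 : (1:ℝ)*θ = θ := by ring
      have hs2 : Real.sin (2*θ) = lam * Real.sin θ := by
        have h := hrecs 1
        rw [a1, a2, a4, Real.sin_zero] at h
        linarith
      unfold rosenInv
      rw [Function.iterate_one, hstep1]
      simp only [auxNT, auxDT, auxNV, auxDV, Nat.cast_one, a1, a2, a3, a4,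
        Real.sin_zero, Real.sin_neg, hs2]
      have hDT1 : (2*Real.sin θ + -Real.sin θ)*t + 0 ≠ 0 := by
        have e : (2*Real.sin θ + -Real.sin θ)*t + 0 = Real.sin θ * t := by ring
        rw [e]
        exact (mul_neg_of_pos_of_neg hsθ ht0).ne
      have hDV1 : (0:ℝ) < -Real.sin θ*v + 2*(lam*Real.sin θ) + 0 := by
        nlinarith [mul_pos hsθ h2v]
      have hvalT : (-(2*(lam*Real.sin θ) + 0)*t - Real.sin θ) /
          ((2*Real.sin θ + -Real.sin θ)*t + 0) = -1/t - lam*2 := by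
        rw [div_eq_iff hDT1]
        field_simp [ht0.ne]
        ring
      have hvalV : (-0*v + 2*Real.sin θ + -Real.sin θ) /
          (-Real.sin θ*v + 2*(lam*Real.sin θ) + 0) = 1/(2*lam - v) := by
        rw [div_eq_div_iff hDV1.ne' h2v.ne']
        ring
      rw [hvalT, hvalV]
      have hq : (1+α)*lam ≤ -1/t := by
        rw [le_div_iff_of_neg ht0]
        linarith [h1a]
      refine ⟨rfl, hDT1, hDV1, ?_, ?_, ?_, ?_⟩
      · -- lower bound for t₁
        have h2 : (1/(α*lam))*(α*lam) = 1 := by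
          have : α*lam ≠ 0 := by positivity
          field_simp
        have hsub : (1-α)*lam ≤ 1/(α*lam) := by
          nlinarith [h2, mul_pos hαpos hlampos, hα2, hlam2, hα1]
        linarith [hq]
      · linarith [ht3]
      · positivity
      · have e : Real.sin θ/(lam*Real.sin θ) = 1/lam := by
          rw [div_eq_div_iff (by positivity : lam*Real.sin θ ≠ 0) hlampos.ne']
          ring
        rw [e]
        exact one_div_le_one_div_of_le hlampos (by linarith)
    | succ n hn ih =>
      intro hn1
      have hnp : n ≤ p - 1 := by omega
      obtain ⟨hIt, hDT, hDV, hT1, hT2, hV1, hV2⟩ := ih hnp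
      have hnR : (1:ℝ) ≤ (n:ℝ) := by exact_mod_cast hn
      have hnpR : (n:ℝ) + 2 ≤ (p:ℝ) := by
        have h' : n + 2 ≤ p := by omega
        exact_mod_cast h'
      have hc0 : 0 < Real.cos ((n:ℝ)*θ) := hcospos _ (by linarith) (by linarith)
      have hc1 : 0 < Real.cos (((n:ℝ)+1)*θ) := hcospos _ (by linarith) (by linarith)
      have hc2 : 0 ≤ Real.cos (((n:ℝ)+2)*θ) := hcosnn _ (by linarith) (by linarith)
      have hs0 : 0 < Real.sin ((n:ℝ)*θ) := hsinpos _ (by linarith) (by linarith)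
      have hs1 : 0 < Real.sin (((n:ℝ)+1)*θ) := hsinpos _ (by linarith) (by linarith)
      have hs2 : 0 < Real.sin (((n:ℝ)+2)*θ) := hsinpos _ (by linarith) (by linarith)
      obtain ⟨Tn, hTn⟩ : ∃ x:ℝ, x = auxNT θ t ↑n / auxDT θ t ↑n := ⟨_, rfl⟩
      obtain ⟨Vn, hVn⟩ : ∃ x:ℝ, x = auxNV θ v ↑n / auxDV θ v ↑n := ⟨_, rfl⟩
      rw [← hTn] at hT1 hT2
      rw [← hVn] at hV1 hV2
      rw [← hTn, ← hVn] at hIt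
      -- Chebyshev relations
      have r1 : Real.sin (((n:ℝ)+2)*θ)
          = lam * Real.sin (((n:ℝ)+1)*θ) - Real.sin ((n:ℝ)*θ) := by
        have h := hrecs ((n:ℝ)+1)
        rw [(by ring : ((n:ℝ)+1+1) = (n:ℝ)+2), (by ring : ((n:ℝ)+1-1) = (n:ℝ))] at h
        exact h
      have r2 : Real.sin (((n:ℝ)+1)*θ)
          = lam * Real.sin ((n:ℝ)*θ) - Real.sin (((n:ℝ)-1)*θ) := hrecs (n:ℝ)
      have r3 : Real.sin ((n:ℝ)*θ)
          = lam * Real.sin (((n:ℝ)-1)*θ) - Real.sin (((n:ℝ)-2)*θ) := by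
        have h := hrecs ((n:ℝ)-1)
        rw [(by ring : ((n:ℝ)-1+1) = (n:ℝ)), (by ring : ((n:ℝ)-1-1) = (n:ℝ)-2)] at h
        exact h
      have r1c : Real.cos (((n:ℝ)+2)*θ)
          = lam * Real.cos (((n:ℝ)+1)*θ) - Real.cos ((n:ℝ)*θ) := by
        have h := hrecc ((n:ℝ)+1)
        rw [(by ring : ((n:ℝ)+1+1) = (n:ℝ)+2), (by ring : ((n:ℝ)+1-1) = (n:ℝ))] at h
        exact h
      -- negativity of Tn
      rw [(by ring : -Real.cos (((n:ℝ)+1)*θ) / Real.cos ((n:ℝ)*θ)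
            = -(Real.cos (((n:ℝ)+1)*θ) / Real.cos ((n:ℝ)*θ)))] at hT2
      have hTneg : Tn < 0 := by
        have h1 : 0 < Real.cos (((n:ℝ)+1)*θ) / Real.cos ((n:ℝ)*θ) := div_pos hc1 hc0
        linarith
      have hNTne : auxNT θ t ↑n ≠ 0 := by
        intro h
        rw [hTn, h, zero_div] at hTneg
        exact lt_irrefl _ hTneg
      -- strict upper bound needed for the digit
      have hkey : Real.cos ((n:ℝ)*θ) < (1+α)*lam*Real.cos (((n:ℝ)+1)*θ) := by
        have hX : 0 ≤ Real.cos (((n:ℝ)+2)*θ) + Real.cos ((n:ℝ)*θ) := by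
          linarith only [hc2, hc0]
        have hprod := mul_nonneg (by linarith only [hα1] : (0:ℝ) ≤ α - 1/2) hX
        have e : (1+α)*lam*Real.cos (((n:ℝ)+1)*θ)
            = (1+α)*(Real.cos (((n:ℝ)+2)*θ) + Real.cos ((n:ℝ)*θ)) := by
          linear_combination (-(1+α))*r1c
        linarith only [hprod, hc0, hc2, e]
      have hT15 : Tn < -(1/((1+α)*lam)) := by
        have h1 : (1/((1+α)*lam)) < Real.cos (((n:ℝ)+1)*θ)/Real.cos ((n:ℝ)*θ) := by
          rw [div_lt_div_iff₀ (by positivity) hc0]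
          linarith only [hkey]
        linarith
      have halp : (0:ℝ) < α*lam := mul_pos hαpos hlampos
      have eα : (α*lam)*(-(1/(α*lam))) = -1 := by field_simp
      have eα2 : ((1+α)*lam)*(-(1/((1+α)*lam))) = -1 := by
        have h : (1+α)*lam ≠ 0 := by positivity
        field_simp
      -- digit of Tn is 1
      have hd1 : rosenD lam α Tn = 1 := by
        apply rosenD_eq Tn 1 hlampos hTneg
        · push_cast
          rw [le_div_iff_of_neg (mul_neg_of_pos_of_neg hlampos hTneg)]
          linarith only [mul_le_mul_of_nonneg_left hT1 halp.le, eα]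
        · push_cast
          rw [div_lt_iff_of_neg (mul_neg_of_pos_of_neg hlampos hTneg)]
          linarith only [mul_lt_mul_of_pos_left hT15 (by positivity : (0:ℝ) < (1+α)*lam), eα2]
      -- one application of the map
      have hstep1 := rosenNE_step (lam:=lam) (α:=α) Tn Vn hTneg
      rw [hd1] at hstep1
      push_cast at hstep1
      -- gap for v
      have hgap : Vn < lam := by
        have hb : Real.sin ((n:ℝ)*θ)/Real.sin (((n:ℝ)+1)*θ) < lam := by
          rw [div_lt_iff₀ hs1]
          linarith only [r1, hs2]
        linarith [hV2]
      have hDV2 : 0 < lam * auxDV θ v ↑n - auxNV θ v ↑n := by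
        have e : lam * auxDV θ v ↑n - auxNV θ v ↑n = auxDV θ v ↑n * (lam - Vn) := by
          rw [hVn]
          field_simp
        rw [e]
        exact mul_pos hDV (by linarith)
      -- casts and structural identities
      have hcast : ((n+1:ℕ):ℝ) = (n:ℝ)+1 := by push_cast; ring
      have eNT' : auxNT θ t ((n:ℝ)+1) = auxDT θ t ↑n + lam * auxNT θ t ↑n := by
        simp only [auxNT, auxDT]
        rw [(by ring : ((n:ℝ)+1+1) = (n:ℝ)+2), (by ring : ((n:ℝ)+1-1) = (n:ℝ))]
        linear_combination (-2*t) * r1 - t * r3 - r2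
      have eDT' : auxDT θ t ((n:ℝ)+1) = -auxNT θ t ↑n := by
        simp only [auxNT, auxDT]
        rw [(by ring : ((n:ℝ)+1-2) = (n:ℝ)-1), (by ring : ((n:ℝ)+1-1) = (n:ℝ))]
        ring
      have eNV' : auxNV θ v ((n:ℝ)+1) = auxDV θ v ↑n := by
        simp only [auxNV, auxDV]
        rw [(by ring : ((n:ℝ)+1-2) = (n:ℝ)-1), (by ring : ((n:ℝ)+1-1) = (n:ℝ))]
      have eDV' : auxDV θ v ((n:ℝ)+1) = lam * auxDV θ v ↑n - auxNV θ v ↑n := by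
        simp only [auxNV, auxDV]
        rw [(by ring : ((n:ℝ)+1+1) = (n:ℝ)+2), (by ring : ((n:ℝ)+1-1) = (n:ℝ))]
        linear_combination (-v)*r2 + 2*r1 + r3
      have hDT' : auxDT θ t ((n:ℝ)+1) ≠ 0 := by
        rw [eDT']
        exact neg_ne_zero.mpr hNTne
      have hDV' : 0 < auxDV θ v ((n:ℝ)+1) := by
        rw [eDV']; exact hDV2
      -- the new values
      have hvalT : auxNT θ t ((n:ℝ)+1) / auxDT θ t ((n:ℝ)+1) = -1/Tn - lam := by
        rw [eNT', eDT', hTn]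
        field_simp [hNTne]
        ring
      have hgap' : 0 < lam - auxNV θ v ↑n / auxDV θ v ↑n := by
        rw [← hVn]; linarith [hgap]
      have hvalV : auxNV θ v ((n:ℝ)+1) / auxDV θ v ((n:ℝ)+1) = 1/(lam - Vn) := by
        rw [eNV', eDV', hVn]
        rw [div_eq_div_iff hDV2.ne' hgap'.ne']
        field_simp [hDV.ne']
      have hstep2 : rosenNE lam α (Tn, Vn) = (-1/Tn - lam, 1/(lam - Vn)) := by
        rw [hstep1]; norm_num
      unfold rosenInv
      rw [Function.iterate_succ_apply', hIt, hstep2, hcast]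
      rw [(by ring : ((n:ℝ)+1+1) = (n:ℝ)+2)]
      rw [hvalT, hvalV]
      have hq : α*lam ≤ -1/Tn := by
        rw [le_div_iff_of_neg hTneg]
        linarith only [mul_le_mul_of_nonneg_left hT1 halp.le, eα]
      refine ⟨rfl, hDT', hDV', ?_, ?_, ?_, ?_⟩
      · have hα3 : α < 1 := by
          have h := mul_le_mul_of_nonneg_left hlam1.le hαpos.le
          linarith only [h, hα2]
        have h1 : (1-α)*lam ≤ (1-α)*2 :=
          mul_le_mul_of_nonneg_left hlam2 (by linarith only [hα3])
        have ha : (1-α)*lam < 1 := by linarith only [h1, hα1]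
        have hb : 1 < 1/(α*lam) := by
          rw [lt_div_iff₀ halp]
          linarith only [hα2]
        linarith only [hq, ha, hb, hlam2]
      · have hb2 : -Real.cos (((n:ℝ)+2)*θ)/Real.cos (((n:ℝ)+1)*θ)
            = Real.cos ((n:ℝ)*θ)/Real.cos (((n:ℝ)+1)*θ) - lam := by
          have e1 : -Real.cos (((n:ℝ)+2)*θ)/Real.cos (((n:ℝ)+1)*θ)
              = (Real.cos ((n:ℝ)*θ) - lam*Real.cos (((n:ℝ)+1)*θ))/Real.cos (((n:ℝ)+1)*θ) := by
            rw [div_eq_div_iff hc1.ne' hc1.ne']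
            linear_combination (-Real.cos (((n:ℝ)+1)*θ))*r1c
          have e2 : (Real.cos ((n:ℝ)*θ) - lam*Real.cos (((n:ℝ)+1)*θ))/Real.cos (((n:ℝ)+1)*θ)
              = Real.cos ((n:ℝ)*θ)/Real.cos (((n:ℝ)+1)*θ) - lam := by
            rw [sub_div, mul_div_assoc, div_self hc1.ne', mul_one]
          rw [e1, e2]
        have h2 : Real.cos (((n:ℝ)+1)*θ)/Real.cos ((n:ℝ)*θ) ≤ -Tn := by
          linarith only [hT2]
        have h3 := one_div_le_one_div_of_le (div_pos hc1 hc0) h2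
        rw [one_div_div] at h3
        have h5 : 1/(-Tn) = -1/Tn := by rw [div_neg, neg_div]
        rw [hb2]
        linarith only [h3, h5]
      · exact one_div_pos.mpr (by linarith only [hgap])
      · have hss : lam - Real.sin ((n:ℝ)*θ)/Real.sin (((n:ℝ)+1)*θ)
            = Real.sin (((n:ℝ)+2)*θ)/Real.sin (((n:ℝ)+1)*θ) := by
          rw [eq_div_iff hs1.ne', sub_mul, div_mul_cancel₀ _ hs1.ne']
          linear_combination -r1
        have h6 : Real.sin (((n:ℝ)+2)*θ)/Real.sin (((n:ℝ)+1)*θ) ≤ lam - Vn := by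
          linarith only [hV2, hss]
        have h7 := one_div_le_one_div_of_le (div_pos hs2 hs1) h6
        rw [one_div_div] at h7
        exact h7
  -- apply the invariant at j = p-1
  obtain ⟨hIt, hDT, hDV, hT1, hT2, hV1, hV2⟩ := key (p-1) (by omega) le_rfl
  have hcast : ((p-1:ℕ):ℝ) = (p:ℝ)-1 := by
    rw [Nat.cast_sub (by omega : 1 ≤ p), Nat.cast_one]
  rw [hcast] at hIt hDT hDV
  have a1 : ((p:ℝ)-1+1)*θ = Real.pi/2 := by rw [← hpθ]; ring
  have a2 : ((p:ℝ)-1)*θ = Real.pi/2 - 1*θ := by rw [← hpθ]; ring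
  have a3 : ((p:ℝ)-1-1)*θ = Real.pi/2 - 2*θ := by rw [← hpθ]; ring
  have a4 : ((p:ℝ)-1-2)*θ = Real.pi/2 - 3*θ := by rw [← hpθ]; ring
  have s1 : Real.sin (((p:ℝ)-1+1)*θ) = 1 := by rw [a1, Real.sin_pi_div_two]
  have s2 : Real.sin (((p:ℝ)-1)*θ) = lam/2 := by
    rw [a2, one_mul, Real.sin_pi_div_two_sub, hcosθ]
  have s3 : Real.sin (((p:ℝ)-1-1)*θ) = (lam^2-2)/2 := by
    rw [a3, Real.sin_pi_div_two_sub, Real.cos_two_mul, hcosθ]; ring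
  have s4 : Real.sin (((p:ℝ)-1-2)*θ) = (lam^3-3*lam)/2 := by
    rw [a4, Real.sin_pi_div_two_sub, Real.cos_three_mul, hcosθ]; ring
  rw [hIt]
  simp only [auxNT, auxDT, auxNV, auxDV] at hDT hDV ⊢
  simp only [s1, s2, s3, s4] at hDT hDV ⊢
  have htden : (lam^3-lam)*t + lam^2-2 ≠ 0 := by
    have e : (lam^3-lam)*t + lam^2-2
        = 2*((2*(lam/2) + (lam^3-3*lam)/2)*t + (lam^2-2)/2) := by ring
    rw [e]
    exact mul_ne_zero two_ne_zero hDT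
  have hvden : -lam*v + lam^2+2 ≠ 0 := by
    have e : -lam*v + lam^2+2
        = 2*(-(lam/2)*v + 2*1 + (lam^2-2)/2) := by ring
    rw [e]
    exact mul_ne_zero two_ne_zero hDV.ne'
  rw [Prod.mk.injEq]
  constructor
  · rw [div_eq_div_iff hDT htden]
    ring
  · rw [div_eq_div_iff hDV.ne' hvden]
    ring

set_option maxHeartbeats 1000000 in
/-- **Lemma 3.17** (explicit form of `𝒯_α^{p-1}` on `A ∪ D₃`).  For even `q = 2p`,
`p ≥ 3`, `λ = 2cos(π/q)` and `α ∈ (1/2, 1/λ)`, every `(t,v) ∈ A ∪ D₃` satisfies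
`𝒯_α^{p-1}(t,v) = (((-λ²-2)t - λ)/((λ³-λ)t + λ²-2), ((-λ²+2)v + λ³-λ)/(-λv + λ²+2))`. -/
theorem natural_extension_round_explicit (p : ℕ) (hp : 3 ≤ p) (lam : ℝ)
    (hlam : lam = 2 * Real.cos (Real.pi / (2 * (p : ℝ))))
    (α : ℝ) (hα : α ∈ Set.Ioo (1 / 2 : ℝ) (1 / lam))
    (t v : ℝ) (htv : (t, v) ∈ regA lam α ∪ regD3 lam α) :
    (rosenNE lam α)^[p - 1] (t, v) =
      (((-lam ^ 2 - 2) * t - lam) / ((lam ^ 3 - lam) * t + lam ^ 2 - 2),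
        ((-lam ^ 2 + 2) * v + lam ^ 3 - lam) / (-lam * v + lam ^ 2 + 2)) := by

  obtain ⟨hα1, hα1'⟩ := hα
  have hp' : (3:ℝ) ≤ (p:ℝ) := by exact_mod_cast hp
  have pipos := Real.pi_pos
  have hθpos : 0 < Real.pi/(2*(p:ℝ)) := by positivity
  have hθ6 : Real.pi/(2*(p:ℝ)) ≤ Real.pi/6 := by
    rw [div_le_div_iff₀ (by linarith) (by norm_num)]
    nlinarith
  have hc : 0 < Real.cos (Real.pi/(2*(p:ℝ))) := by
    apply Real.cos_pos_of_mem_Ioo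
    constructor <;> nlinarith [Real.pi_pos]
  have hlam2 : lam ≤ 2 := by
    have := Real.cos_le_one (Real.pi/(2*(p:ℝ))); rw [hlam]; linarith
  have hlam1 : 1 < lam := by
    have h13 : Real.cos (Real.pi/3) < Real.cos (Real.pi/(2*(p:ℝ))) := by
      apply Real.cos_lt_cos_of_nonneg_of_le_pi hθpos.le (by linarith)
      linarith
    rw [Real.cos_pi_div_three] at h13
    rw [hlam]; linarith
  have hlampos : (0:ℝ) < lam := by linarith
  have hαpos : (0:ℝ) < α := by linarith
  have hα2 : α * lam < 1 := by
    rw [lt_div_iff₀ hlampos] at hα1'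
    exact hα1'
  have h2c : Real.cos (2*(Real.pi/(2*(p:ℝ))))
      = 2*Real.cos (Real.pi/(2*(p:ℝ)))^2 - 1 := Real.cos_two_mul _
  have hcos1 := Real.cos_le_one (Real.pi/(2*(p:ℝ)))
  cases htv with
  | inl h =>
    simp only [regA, Set.mem_setOf_eq] at h
    obtain ⟨ha1, ha2, _, ha4⟩ := h
    have ht0 : t < 0 := by
      have h0 : 0 < 1/(lam+1) := by positivity
      linarith
    apply rosen_key p hp lam α t v hlam hα1 hα2
    · have e : (1+α)*lam = (α+1)*lam := by ring
      rw [e]; exact ha1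
    · have hA : 1/((2+α)*lam) < 1/(lam+1) := by
        apply one_div_lt_one_div_of_lt (by positivity)
        nlinarith
      linarith
    · -- ht3
      have h1 : 1/(lam+1) ≤ -t := by linarith
      have h2 := one_div_le_one_div_of_le (by positivity : (0:ℝ) < 1/(lam+1)) h1
      rw [one_div_one_div] at h2
      have h5 : 1/(-t) = -1/t := by rw [div_neg, neg_div]
      have key2 : 1 - lam ≤ -Real.cos (2*(Real.pi/(2*(p:ℝ))))/Real.cos (Real.pi/(2*(p:ℝ))) := by
        rw [le_div_iff₀ hc, hlam, h2c]
        nlinarith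
      linarith
    · linarith
  | inr h =>
    simp only [regD3, Set.mem_setOf_eq] at h
    obtain ⟨hd1, hd2, _, hd4⟩ := h
    have hα3 : α < 1 := by
      have h := mul_le_mul_of_nonneg_left hlam1.le hαpos.le
      linarith
    have hl4 : lam^2 ≤ 4 := by nlinarith
    have hD : 0 < 2-(1-α)*lam^2 := by
      have h1 : (1-α)*lam^2 ≤ (1-α)*4 :=
        mul_le_mul_of_nonneg_left hl4 (by linarith)
      linarith
    have ht0 : t < 0 := by
      have h0 : 0 < 2/(lam+4) := by positivity
      linarith
    apply rosen_key p hp lam α t v hlam hα1 hα2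
    · have h0 : (2*α-1)*lam/(2-(1-α)*lam^2) ≤ 1/((1+α)*lam) := by
        rw [div_le_div_iff₀ hD (by positivity)]
        nlinarith [hα2, mul_pos hαpos hlampos]
      linarith
    · have hA : 1/((2+α)*lam) < 2/(lam+4) := by
        rw [div_lt_div_iff₀ (by positivity) (by positivity)]
        nlinarith
      linarith
    · have h1 : 2/(lam+4) ≤ -t := by linarith
      have h2 := one_div_le_one_div_of_le (by positivity : (0:ℝ) < 2/(lam+4)) h1
      rw [one_div_div] at h2
      have h5 : 1/(-t) = -1/t := by rw [div_neg, neg_div]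
      have key2 : 2 - (3/2)*lam ≤ -Real.cos (2*(Real.pi/(2*(p:ℝ))))/Real.cos (Real.pi/(2*(p:ℝ))) := by
        rw [le_div_iff₀ hc, hlam, h2c]
        nlinarith [sq_nonneg (Real.cos (Real.pi/(2*(p:ℝ))) - 1)]
      linarith
    · linarith
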